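/- For all k ≥ 1, the evaluation at z = 1 of the degree-k homogeneous component of the two-sided ideal of T[z] generated by h(P) equals P_k; that is, φ_1(⟨h(P)⟩_k) = P_k. -/

import Mathlib

open Polynomial

noncomputable section

namespace PBWPaper

variable (K : Type*) [Field K] (s : ℕ)

/-- The free associative algebra `T = K⟨x_1,…,x_s⟩`. -/
abbrev T := FreeAlgebra K (Fin s)

/-- `V`: the span of the generators (the degree-one part of `T`). -/
def V : Submodule K (T K s) :=
  Submodule.span K (Set.range (FreeAlgebra.ι K : Fin s → T K s))

/-- `T_i`: the span of the words of length `i`. -/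
def Tgrade (i : ℕ) : Submodule K (T K s) := V K s ^ i

/-- `F^kT = ⊕_{i ≤ k} T_i`, the standard filtration of `T`. -/
def Ffilt (k : ℕ) : Submodule K (T K s) := ⨆ i ≤ k, Tgrade K s i

/-- An element of `T[z]` (with `deg z = 1`, total grading) is homogeneous of degree `n`
iff its `z^j`-coefficient lies in `T_{n-j}` for `j ≤ n` and vanishes for `j > n`. -/
def homogZ (n : ℕ) (w : Polynomial (T K s)) : Prop :=
  (∀ j ≤ n, w.coeff j ∈ Tgrade K s (n - j)) ∧ ∀ j, n < j → w.coeff j = 0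

/-- The nested subspaces `P_k` of `T`:  `P_1 = span(P ∩ F^1 T)` and
`P_k = V·P_{k-1} + P_{k-1}·V + span(P ∩ F^k T)` for `k > 1`. -/
def Pk (Pset : Set (T K s)) : ℕ → Submodule K (T K s)
  | 0 => ⊥
  | k + 1 => V K s * Pk Pset k + Pk Pset k * V K s +
      Submodule.span K (Pset ∩ (Ffilt K s (k + 1) : Set (T K s)))


variable {m : ℕ}

/-- The set of relations `P = {r_1+l_1, …, r_m+l_m}` of the deformation `U = T/⟨P⟩`. -/
def PsetOf (r l : Fin m → T K s) : Set (T K s) := Set.range fun i => r i + l i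

/-- The homogenization `h(r_i+l_i) = r_i + Σ_{j<d_i} z^{d_i-j} l_{i,j} ∈ T[z]`,
where `l_i = Σ_{j<d_i} l_{i,j}` is the decomposition of `l_i` into homogeneous components. -/
def hRel (d : Fin m → ℕ) (r : Fin m → T K s) (lc : Fin m → ℕ → T K s) (i : Fin m) :
    Polynomial (T K s) :=
  Polynomial.C (r i) + ∑ j ∈ Finset.range (d i), Polynomial.monomial (d i - j) (lc i j)

/-- The set of relations `h(P)` of the central extension `D = T[z]/⟨h(P)⟩`. -/
def hPset (d : Fin m → ℕ) (r : Fin m → T K s) (lc : Fin m → ℕ → T K s) :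
    Set (Polynomial (T K s)) := Set.range (hRel K s d r lc)

/-! Write `p_i = r_i + l_i`; homogeneous components of `T[z]` are taken for the total degree.
The degree-`n` part of `a · h(p_i) · b` evaluates at `z = 1` into `F^u T · p_i · F^v T` with
`u + d_i + v = n`, and `F^u T · P_q ⊆ P_{u+q}`, `P_q · F^v T ⊆ P_{q+v}`; so `φ_1(⟨h(P)⟩_k) ⊆ P_k`.
Conversely, the subspaces `φ_1(⟨h(P)⟩_k)` are stable under multiplication by `V` on either side
(multiply by a generator, of degree one), and contain every `p_i ∈ F^k T`: then `d_i ≤ k` because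
`r_i ≠ 0`, and `z^{k - d_i} h(p_i)` is homogeneous of degree `k`. Since `P_k` is the least family
with these properties, `P_k ⊆ φ_1(⟨h(P)⟩_k)`. -/

section Grading

/-- The algebra map `x ↦ ∑ₙ xₙ Xⁿ`, where `xₙ ∈ T_n` is the degree-`n` component of `x`. -/
def grading : T K s →ₐ[K] (T K s)[X] :=
  FreeAlgebra.lift K fun i => X * C (FreeAlgebra.ι K i)

variable {K s}

theorem Tgrade_add (a b : ℕ) : Tgrade K s (a + b) = Tgrade K s a * Tgrade K s b :=
  pow_add _ a b

theorem Tgrade_one : Tgrade K s 1 = V K s :=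
  pow_one _

theorem algebraMap_mem_Tgrade_zero (c : K) : algebraMap K (T K s) c ∈ Tgrade K s 0 :=
  (pow_zero (V K s)).ge (Submodule.algebraMap_mem c)

theorem grading_of_mem_V {v : T K s} (hv : v ∈ V K s) : grading K s v = monomial 1 v := by
  induction hv using Submodule.span_induction with
  | mem x hx =>
    obtain ⟨i, rfl⟩ := hx
    rw [grading, FreeAlgebra.lift_ι_apply, ← C_mul_X_eq_monomial, X_mul]
  | zero => simp
  | add x y _ _ hx hy => rw [map_add, hx, hy, map_add]
  | smul c x _ hx => rw [map_smul, hx, smul_monomial]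

theorem grading_of_mem_Tgrade {n : ℕ} {x : T K s} (hx : x ∈ Tgrade K s n) :
    grading K s x = monomial n x := by
  induction n generalizing x with
  | zero =>
    obtain ⟨c, rfl⟩ := Submodule.mem_one.mp ((pow_zero (V K s)).le hx)
    rw [AlgHom.commutes, Polynomial.algebraMap_apply, ← monomial_zero_left]
  | succ n ih =>
    rw [add_comm, Tgrade_add, Tgrade_one] at hx
    induction hx using Submodule.mul_induction_on' with
    | mem_mul_mem v hv y hy =>
      rw [map_mul, grading_of_mem_V hv, ih hy, monomial_mul_monomial, add_comm]
    | add x _ y _ hx hy => rw [map_add, hx, hy, map_add]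

theorem coeff_grading_mem_Tgrade (x : T K s) (n : ℕ) :
    (grading K s x).coeff n ∈ Tgrade K s n := by
  induction x using FreeAlgebra.induction generalizing n with
  | grade0 c =>
    rw [grading_of_mem_Tgrade (algebraMap_mem_Tgrade_zero c), coeff_monomial]
    split_ifs with h
    · exact h ▸ algebraMap_mem_Tgrade_zero c
    · exact zero_mem _
  | grade1 i =>
    have hi : FreeAlgebra.ι K i ∈ Tgrade K s 1 := Tgrade_one.ge (Submodule.subset_span ⟨i, rfl⟩)
    rw [grading_of_mem_Tgrade hi, coeff_monomial]
    split_ifs with h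
    · exact h ▸ hi
    · exact zero_mem _
  | mul x y hx hy =>
    rw [map_mul, coeff_mul]
    refine Submodule.sum_mem _ fun p hp => ?_
    obtain rfl := Finset.HasAntidiagonal.mem_antidiagonal.mp hp
    rw [Tgrade_add]
    exact Submodule.mul_mem_mul (hx p.1) (hy p.2)
  | add x y hx hy =>
    rw [map_add, coeff_add]
    exact add_mem (hx n) (hy n)

theorem Tgrade_le_Ffilt {j n : ℕ} (h : j ≤ n) : Tgrade K s j ≤ Ffilt K s n :=
  le_biSup (Tgrade K s) h

theorem Ffilt_mono : Monotone (Ffilt K s) :=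
  fun _ _ h => biSup_mono fun _ hi => hi.trans h

theorem Ffilt_zero : Ffilt K s 0 = 1 :=
  le_antisymm (iSup₂_le fun _ hi => (Nat.le_zero.mp hi ▸ pow_zero (V K s)).le)
    ((pow_zero (V K s)).ge.trans (Tgrade_le_Ffilt le_rfl))

theorem Ffilt_succ (n : ℕ) : Ffilt K s (n + 1) = Ffilt K s n ⊔ Tgrade K s (n + 1) :=
  Nat.iSup_le_succ _ n

theorem coeff_grading_eq_zero_of_mem_Ffilt {n d : ℕ} {x : T K s} (hx : x ∈ Ffilt K s n)
    (hnd : n < d) : (grading K s x).coeff d = 0 := by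
  suffices Ffilt K s n ≤
      LinearMap.ker ((lcoeff (T K s) d).restrictScalars K ∘ₗ (grading K s).toLinearMap) from
    this hx
  refine iSup₂_le fun i hi y hy => ?_
  simp [grading_of_mem_Tgrade hy, coeff_monomial, (hi.trans_lt hnd).ne]

end Grading

section Homogeneous

def homogeneousSubmodule (n : ℕ) : Submodule K (T K s)[X] where
  carrier := {w | homogZ K s n w}
  zero_mem' := ⟨fun j _ => by simp, fun j _ => coeff_zero j⟩
  add_mem' := fun ha hb =>
    ⟨fun j hj => by rw [coeff_add]; exact add_mem (ha.1 j hj) (hb.1 j hj),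
     fun j hj => by rw [coeff_add, ha.2 j hj, hb.2 j hj, add_zero]⟩
  smul_mem' := fun c _ hw =>
    ⟨fun j hj => by rw [coeff_smul]; exact Submodule.smul_mem _ c (hw.1 j hj),
     fun j hj => by rw [coeff_smul, hw.2 j hj, smul_zero]⟩

def evalOne : (T K s)[X] →ₐ[K] T K s :=
  eval₂AlgHom (AlgHom.id K (T K s)) 1 fun a => Commute.one_right a

variable {K s}

theorem evalOne_apply (w : (T K s)[X]) : evalOne K s w = eval 1 w :=
  rfl

@[simp]
theorem evalOne_C (t : T K s) : evalOne K s (C t) = t :=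
  eval_C

@[simp]
theorem evalOne_X : evalOne K s X = 1 :=
  eval_X

theorem monomial_mem_homogeneousSubmodule {j n : ℕ} {t : T K s} (hj : j ≤ n)
    (ht : t ∈ Tgrade K s (n - j)) : monomial j t ∈ homogeneousSubmodule K s n := by
  refine ⟨fun i _ => ?_, fun i hi => coeff_monomial_of_ne _ (by omega)⟩
  rw [coeff_monomial]
  split_ifs with h
  · exact h ▸ ht
  · exact zero_mem _

theorem X_pow_mem_homogeneousSubmodule (n : ℕ) :
    (X ^ n : (T K s)[X]) ∈ homogeneousSubmodule K s n := by
  rw [X_pow_eq_monomial]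
  exact monomial_mem_homogeneousSubmodule le_rfl
    (by simpa using algebraMap_mem_Tgrade_zero (K := K) (s := s) 1)

theorem C_mem_homogeneousSubmodule {n : ℕ} {t : T K s} (ht : t ∈ Tgrade K s n) :
    C t ∈ homogeneousSubmodule K s n :=
  monomial_mem_homogeneousSubmodule n.zero_le ht

theorem C_mem_homogeneousSubmodule_one {v : T K s} (hv : v ∈ V K s) :
    C v ∈ homogeneousSubmodule K s 1 :=
  C_mem_homogeneousSubmodule (Tgrade_one.ge hv)

theorem mul_mem_homogeneousSubmodule {m n : ℕ} {a b : (T K s)[X]}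
    (ha : a ∈ homogeneousSubmodule K s m) (hb : b ∈ homogeneousSubmodule K s n) :
    a * b ∈ homogeneousSubmodule K s (m + n) := by
  refine ⟨fun j hj => ?_, fun j hj => ?_⟩ <;> rw [coeff_mul]
  · refine Submodule.sum_mem _ fun x hx => ?_
    rw [Finset.HasAntidiagonal.mem_antidiagonal] at hx
    by_cases h₁ : x.1 ≤ m
    · by_cases h₂ : x.2 ≤ n
      · rw [show m + n - j = (m - x.1) + (n - x.2) by omega, Tgrade_add]
        exact Submodule.mul_mem_mul (ha.1 _ h₁) (hb.1 _ h₂)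
      · simp [hb.2 _ (not_le.mp h₂)]
    · simp [ha.2 _ (not_le.mp h₁)]
  · refine Finset.sum_eq_zero fun x hx => ?_
    rw [Finset.HasAntidiagonal.mem_antidiagonal] at hx
    by_cases h₁ : x.1 ≤ m
    · rw [hb.2 _ (by omega), mul_zero]
    · rw [ha.2 _ (by omega), zero_mul]

theorem evalOne_mem_Ffilt {n : ℕ} {w : (T K s)[X]} (hw : w ∈ homogeneousSubmodule K s n) :
    evalOne K s w ∈ Ffilt K s n := by
  rw [evalOne_apply, eval_eq_sum, Polynomial.sum]
  refine Submodule.sum_mem _ fun j _ => ?_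
  rw [one_pow, mul_one]
  by_cases hjn : j ≤ n
  · exact Tgrade_le_Ffilt (Nat.sub_le n j) (hw.1 j hjn)
  · rw [hw.2 j (not_le.mp hjn)]
    exact zero_mem _

end Homogeneous

section Bigrading

theorem commute_C_X {R : Type*} [Semiring R] (q : R[X][X]) : Commute (C X) q := by
  ext n j
  rw [coeff_C_mul, coeff_mul_C, X_mul]

/-- `w ↦ ∑ₙ wₙ Yⁿ` with `Y` the outer variable, where `wₙ` is the total-degree-`n` component
of `w`. -/
def bigrading : (T K s)[X] →ₐ[K] (T K s)[X][X] :=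
  eval₂AlgHom ((mapAlgHom CAlgHom).comp (grading K s)) (C X * X)
    fun _ => ((commute_C_X _).symm).mul_right (commute_X _).symm

variable {K s}

theorem bigrading_monomial (e : ℕ) (t : T K s) :
    bigrading K s (monomial e t) = (grading K s t).map C * C (X ^ e) * X ^ e := by
  rw [← C_mul_X_pow_eq_monomial, map_mul, map_pow, bigrading, eval₂AlgHom_apply,
    eval₂AlgHom_apply, eval₂_C, eval₂_X, (commute_C_X X).mul_pow, ← C_pow, ← mul_assoc]
  rfl

theorem coeff_coeff_bigrading (w : (T K s)[X]) (n j : ℕ) :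
    ((bigrading K s w).coeff n).coeff j
      = if j ≤ n then (grading K s (w.coeff j)).coeff (n - j) else 0 := by
  induction w using Polynomial.induction_on' with
  | add p q hp hq =>
    rw [map_add, coeff_add, coeff_add, hp, hq, coeff_add, map_add, coeff_add]
    split_ifs <;> simp
  | monomial e t =>
    rw [bigrading_monomial, coeff_mul_X_pow', coeff_monomial]
    by_cases hen : e ≤ n
    · rw [if_pos hen, coeff_mul_C, coeff_map, C_mul_X_pow_eq_monomial, coeff_monomial]
      by_cases hej : e = j
      · subst hej
        rw [if_pos rfl, if_pos rfl, if_pos hen]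
      · rw [if_neg hej, if_neg hej]
        split_ifs <;> simp
    · rw [if_neg hen, coeff_zero]
      split_ifs <;> first | omega | simp

theorem coeff_bigrading_mem_homogeneousSubmodule (w : (T K s)[X]) (n : ℕ) :
    (bigrading K s w).coeff n ∈ homogeneousSubmodule K s n := by
  refine ⟨fun j hj => ?_, fun j hj => ?_⟩ <;> rw [coeff_coeff_bigrading]
  · rw [if_pos hj]
    exact coeff_grading_mem_Tgrade _ _
  · rw [if_neg (by omega)]

theorem bigrading_of_mem_homogeneousSubmodule {n : ℕ} {w : (T K s)[X]}
    (hw : w ∈ homogeneousSubmodule K s n) : bigrading K s w = monomial n w := by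
  ext c j
  rw [coeff_coeff_bigrading, coeff_monomial]
  by_cases hjn : j ≤ n
  · rw [grading_of_mem_Tgrade (hw.1 j hjn), coeff_monomial]
    split_ifs <;> first | omega | simp_all
  · have hj := hw.2 j (not_le.mp hjn)
    split_ifs <;> simp [hj]

theorem evalOne_coeff_bigrading_mem_Ffilt (w : (T K s)[X]) (n : ℕ) :
    evalOne K s ((bigrading K s w).coeff n) ∈ Ffilt K s n :=
  evalOne_mem_Ffilt (coeff_bigrading_mem_homogeneousSubmodule w n)

end Bigrading

section Pk

variable {K s} {Pset : Set (T K s)}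

theorem Pk_succ (k : ℕ) :
    Pk K s Pset (k + 1) = V K s * Pk K s Pset k + Pk K s Pset k * V K s +
      Submodule.span K (Pset ∩ (Ffilt K s (k + 1) : Set (T K s))) :=
  rfl

theorem V_mul_Pk_le (k : ℕ) : V K s * Pk K s Pset k ≤ Pk K s Pset (k + 1) :=
  le_sup_left.trans le_sup_left

theorem Pk_mul_V_le (k : ℕ) : Pk K s Pset k * V K s ≤ Pk K s Pset (k + 1) :=
  le_sup_right.trans le_sup_left

theorem mem_Pk_of_mem {p : T K s} {n : ℕ} (hp : p ∈ Pset) (hpn : p ∈ Ffilt K s n)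
    (hn : n ≠ 0) : p ∈ Pk K s Pset n := by
  obtain ⟨k, rfl⟩ := Nat.exists_eq_succ_of_ne_zero hn
  exact (le_sup_right : _ ≤ Pk K s Pset (k + 1)) (Submodule.subset_span ⟨hp, hpn⟩)

theorem Pk_mono : Monotone (Pk K s Pset) := by
  refine monotone_nat_of_le_succ fun k => ?_
  induction k with
  | zero => exact bot_le
  | succ k ih =>
    rw [Pk_succ, Pk_succ (k + 1)]
    gcongr
    exact Ffilt_mono (Nat.le_succ _)

theorem Ffilt_mul_Pk_le (u k : ℕ) : Ffilt K s u * Pk K s Pset k ≤ Pk K s Pset (u + k) := by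
  induction u with
  | zero => rw [Ffilt_zero, one_mul, zero_add]
  | succ u ih =>
    rw [Ffilt_succ, Submodule.sup_mul, add_comm u, Tgrade_add, Tgrade_one, mul_assoc,
      add_assoc, add_comm 1]
    refine sup_le (ih.trans (Pk_mono (Nat.le_succ _))) ?_
    exact (mul_le_mul_right ((mul_le_mul_left (Tgrade_le_Ffilt le_rfl) _).trans ih) _).trans
      (V_mul_Pk_le _)

theorem Pk_mul_Ffilt_le (k u : ℕ) : Pk K s Pset k * Ffilt K s u ≤ Pk K s Pset (k + u) := by
  induction u with
  | zero => rw [Ffilt_zero, mul_one, add_zero]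
  | succ u ih =>
    rw [Ffilt_succ, Submodule.mul_sup, Tgrade_add, Tgrade_one, ← mul_assoc, ← add_assoc]
    refine sup_le (ih.trans (Pk_mono (Nat.le_succ _))) ?_
    exact (mul_le_mul_left ((mul_le_mul_right (Tgrade_le_Ffilt le_rfl) _).trans ih) _).trans
      (Pk_mul_V_le _)

theorem Pk_le_of_stable {E : ℕ → Submodule K (T K s)}
    (hVE : ∀ k, V K s * E k ≤ E (k + 1)) (hEV : ∀ k, E k * V K s ≤ E (k + 1))
    (hPE : ∀ k, Submodule.span K (Pset ∩ (Ffilt K s (k + 1) : Set (T K s))) ≤ E (k + 1)) :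
    ∀ k, Pk K s Pset k ≤ E k
  | 0 => bot_le
  | k + 1 => by
    have ih := Pk_le_of_stable hVE hEV hPE k
    exact sup_le (sup_le ((mul_le_mul_right ih _).trans (hVE k))
      ((mul_le_mul_left ih _).trans (hEV k))) (hPE k)

end Pk

section IdealComponent

variable (Pset : Set (T K s))

def PkIdeal : TwoSidedIdeal (T K s)[X] :=
  TwoSidedIdeal.mk' {w | ∀ n, evalOne K s ((bigrading K s w).coeff n) ∈ Pk K s Pset n}
    (fun n => by simp)
    (fun hx hy n => by simpa using add_mem (hx n) (hy n))
    (fun hx n => by simpa using neg_mem (hx n))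
    (fun {x _} hy n => by
      rw [map_mul, coeff_mul, map_sum]
      refine Submodule.sum_mem _ fun p hp => ?_
      obtain rfl := Finset.HasAntidiagonal.mem_antidiagonal.mp hp
      rw [map_mul]
      exact Ffilt_mul_Pk_le _ _
        (Submodule.mul_mem_mul (evalOne_coeff_bigrading_mem_Ffilt x p.1) (hy p.2)))
    (fun {_ y} hx n => by
      rw [map_mul, coeff_mul, map_sum]
      refine Submodule.sum_mem _ fun p hp => ?_
      obtain rfl := Finset.HasAntidiagonal.mem_antidiagonal.mp hp
      rw [map_mul]
      exact Pk_mul_Ffilt_le _ _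
        (Submodule.mul_mem_mul (hx p.1) (evalOne_coeff_bigrading_mem_Ffilt y p.2)))

theorem mem_PkIdeal {w : (T K s)[X]} :
    w ∈ PkIdeal K s Pset ↔ ∀ n, evalOne K s ((bigrading K s w).coeff n) ∈ Pk K s Pset n :=
  TwoSidedIdeal.mem_mk' _ _ _ _ _ _ w

/-- `φ₁(⟨S⟩_k)`. -/
def evalIdealComponent (S : Set (T K s)[X]) (k : ℕ) : Submodule K (T K s) :=
  ((TwoSidedIdeal.span S).asIdeal.restrictScalars K ⊓ homogeneousSubmodule K s k).map
    (evalOne K s).toLinearMap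

variable {K s Pset} {S : Set (T K s)[X]}

theorem evalIdealComponent_le_Pk
    (hS : ∀ w ∈ S, ∃ e ≠ 0, w ∈ homogeneousSubmodule K s e ∧ evalOne K s w ∈ Pset) (k : ℕ) :
    evalIdealComponent K s S k ≤ Pk K s Pset k := by
  have hspan : TwoSidedIdeal.span S ≤ PkIdeal K s Pset := by
    refine TwoSidedIdeal.span_le.mpr fun w hw => mem_PkIdeal K s Pset |>.mpr fun n => ?_
    obtain ⟨e, he, hwe, hwP⟩ := hS w hw
    rw [bigrading_of_mem_homogeneousSubmodule hwe, coeff_monomial]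
    split_ifs with h
    · exact h ▸ mem_Pk_of_mem hwP (evalOne_mem_Ffilt hwe) he
    · simp
  rintro _ ⟨w, ⟨hwI, hwk⟩, rfl⟩
  have hw := (mem_PkIdeal K s Pset).mp (hspan (TwoSidedIdeal.mem_asIdeal.mp hwI)) k
  rwa [bigrading_of_mem_homogeneousSubmodule hwk, coeff_monomial_same] at hw

theorem Pk_le_evalIdealComponent
    (hP : ∀ p ∈ Pset, ∀ n, p ∈ Ffilt K s n →
      ∃ w ∈ S, ∃ e ≤ n, w ∈ homogeneousSubmodule K s e ∧ evalOne K s w = p) :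
    ∀ k, Pk K s Pset k ≤ evalIdealComponent K s S k := by
  refine Pk_le_of_stable (fun k => ?_) (fun k => ?_) (fun k => ?_)
  · refine Submodule.mul_le.mpr ?_
    rintro v hv _ ⟨w, ⟨hwI, hwk⟩, rfl⟩
    refine ⟨C v * w, ⟨?_, ?_⟩, by simp⟩
    · exact TwoSidedIdeal.mem_asIdeal.mpr (TwoSidedIdeal.mul_mem_left _ _ _
        (TwoSidedIdeal.mem_asIdeal.mp hwI))
    · exact add_comm 1 k ▸ mul_mem_homogeneousSubmodule (C_mem_homogeneousSubmodule_one hv) hwk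
  · refine Submodule.mul_le.mpr ?_
    rintro _ ⟨w, ⟨hwI, hwk⟩, rfl⟩ v hv
    refine ⟨w * C v, ⟨?_, ?_⟩, by simp⟩
    · exact TwoSidedIdeal.mem_asIdeal.mpr (TwoSidedIdeal.mul_mem_right _ _ _
        (TwoSidedIdeal.mem_asIdeal.mp hwI))
    · exact mul_mem_homogeneousSubmodule hwk (C_mem_homogeneousSubmodule_one hv)
  · refine Submodule.span_le.mpr ?_
    rintro p ⟨hp, hpk⟩
    obtain ⟨w, hwS, e, he, hwe, rfl⟩ := hP p hp _ hpk
    refine ⟨X ^ (k + 1 - e) * w, ⟨?_, ?_⟩, ?_⟩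
    · exact TwoSidedIdeal.mem_asIdeal.mpr (TwoSidedIdeal.mul_mem_left _ _ _
        (TwoSidedIdeal.subset_span hwS))
    · have hXw := mul_mem_homogeneousSubmodule (X_pow_mem_homogeneousSubmodule (k + 1 - e)) hwe
      rwa [Nat.sub_add_cancel he] at hXw
    · simp

end IdealComponent

section Relations

variable {K s} {m : ℕ} {d : Fin m → ℕ} {r l : Fin m → T K s} {lc : Fin m → ℕ → T K s}

theorem hRel_mem_homogeneousSubmodule (hr : ∀ i, r i ∈ Tgrade K s (d i))
    (hlc : ∀ i j, lc i j ∈ Tgrade K s j) (i : Fin m) :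
    hRel K s d r lc i ∈ homogeneousSubmodule K s (d i) := by
  refine add_mem (C_mem_homogeneousSubmodule (hr i)) (Submodule.sum_mem _ fun j hj => ?_)
  have hj : j < d i := Finset.mem_range.mp hj
  exact monomial_mem_homogeneousSubmodule (Nat.sub_le _ _)
    (by rw [Nat.sub_sub_self hj.le]; exact hlc i j)

theorem evalOne_hRel (hl : ∀ i, l i = ∑ j ∈ Finset.range (d i), lc i j) (i : Fin m) :
    evalOne K s (hRel K s d r lc i) = r i + l i := by
  simp [hRel, evalOne_apply, eval_finsetSum, hl]

theorem coeff_grading_r_add_l (hr : ∀ i, r i ∈ Tgrade K s (d i))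
    (hlc : ∀ i j, lc i j ∈ Tgrade K s j) (hl : ∀ i, l i = ∑ j ∈ Finset.range (d i), lc i j) (i : Fin m) :
    (grading K s (r i + l i)).coeff (d i) = r i := by
  rw [map_add, coeff_add, grading_of_mem_Tgrade (hr i), coeff_monomial_same, hl, map_sum,
    finsetSum_coeff, Finset.sum_eq_zero, add_zero]
  intro j hj
  rw [grading_of_mem_Tgrade (hlc i j), coeff_monomial_of_ne _ (Finset.mem_range.mp hj).ne']

theorem le_of_r_add_l_mem_Ffilt (hr : ∀ i, r i ∈ Tgrade K s (d i)) (hr0 : ∀ i, r i ≠ 0)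
    (hlc : ∀ i j, lc i j ∈ Tgrade K s j) (hl : ∀ i, l i = ∑ j ∈ Finset.range (d i), lc i j)
    {i : Fin m} {n : ℕ} (h : r i + l i ∈ Ffilt K s n) : d i ≤ n := by
  by_contra! hn
  apply hr0 i
  rw [← coeff_grading_r_add_l hr hlc hl i, coeff_grading_eq_zero_of_mem_Ffilt h hn]

end Relations

theorem eval_one_homogeneous_component_eq_Pk_general (K : Type*) [Field K] (s : ℕ)
    {m : ℕ} (d : Fin m → ℕ) (r l : Fin m → T K s) (lc : Fin m → ℕ → T K s)
    -- each relation `r_i` of `A` is homogeneous of degree `d_i ≥ 2` and nonzero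
    (hd : ∀ i, 2 ≤ d i)
    (hr : ∀ i, r i ∈ Tgrade K s (d i))
    (hr0 : ∀ i, r i ≠ 0)
    -- `l_i = Σ_{j < d_i} l_{i,j}` with `l_{i,j}` homogeneous of degree `j`, so `deg l_i < d_i`
    (hlc : ∀ i j, lc i j ∈ Tgrade K s j)
    (hl : ∀ i, l i = ∑ j ∈ Finset.range (d i), lc i j)
    (k : ℕ) :
    -- `φ_1(⟨h(P)⟩_k) = P_k`
    (fun w : Polynomial (T K s) => Polynomial.eval (1 : T K s) w) ''
        {w : Polynomial (T K s) | w ∈ TwoSidedIdeal.span (hPset K s d r lc) ∧ homogZ K s k w}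
      = (Pk K s (PsetOf K s r l) k : Set (T K s)) := by
  have hhom := hRel_mem_homogeneousSubmodule hr hlc
  have hPk : Pk K s (PsetOf K s r l) k = evalIdealComponent K s (hPset K s d r lc) k := by
    refine le_antisymm (Pk_le_evalIdealComponent ?_ k) (evalIdealComponent_le_Pk ?_ k)
    · rintro _ ⟨i, rfl⟩ n hn
      exact ⟨_, ⟨i, rfl⟩, d i, le_of_r_add_l_mem_Ffilt hr hr0 hlc hl hn, hhom i, evalOne_hRel hl i⟩
    · rintro _ ⟨i, rfl⟩
      exact ⟨d i, by linarith [hd i], hhom i, evalOne_hRel hl i ▸ ⟨i, rfl⟩⟩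
  rw [hPk, evalIdealComponent, Submodule.map_coe]
  rfl

theorem eval_one_homogeneous_component_eq_Pk (K : Type*) [Field K] (s : ℕ)
    {m : ℕ} (d : Fin m → ℕ) (r l : Fin m → T K s) (lc : Fin m → ℕ → T K s)
    -- each relation `r_i` of `A` is homogeneous of degree `d_i ≥ 2` and nonzero
    (hd : ∀ i, 2 ≤ d i)
    (hr : ∀ i, r i ∈ Tgrade K s (d i))
    (hr0 : ∀ i, r i ≠ 0)
    -- `l_i = Σ_{j < d_i} l_{i,j}` with `l_{i,j}` homogeneous of degree `j`, so `deg l_i < d_i`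
    (hlc : ∀ i j, lc i j ∈ Tgrade K s j)
    (hl : ∀ i, l i = ∑ j ∈ Finset.range (d i), lc i j)
    (k : ℕ) (hk : 1 ≤ k) :
    -- `φ_1(⟨h(P)⟩_k) = P_k`
    (fun w : Polynomial (T K s) => Polynomial.eval (1 : T K s) w) ''
        {w : Polynomial (T K s) | w ∈ TwoSidedIdeal.span (hPset K s d r lc) ∧ homogZ K s k w}
      = (Pk K s (PsetOf K s r l) k : Set (T K s)) :=
  eval_one_homogeneous_component_eq_Pk_general K s d r l lc hd hr hr0 hlc hl k

end PBWPaper
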